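/- arXiv:1806.01736 — 5 statements merged into one kernel-verified Lean document; each statement's English description precedes it below -/
import Mathlib

section
/- In a classically possible summoning task with unconstrained inputs and at most one return point, the common past input-point sets of any two return points are nonempty: if i ≠ j are return points, Q is a classical solution with local decidability at i and at j, and both i and j are attained (there exist inputs m with Q m = some i and m' with Q m' = some j), then S i ∩ S j is nonempty. -/
/-! If `S i` and `S j` were disjoint, an input agreeing with an `i`-witness on `S i` and with a
`j`-witness on `S j` would be sent by `Q` both to `some i` and to `some j`. -/

open Set

theorem DependsOn.exists_and_of_disjoint {κ : Type*} {V : κ → Type*}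
    {p q : (∀ k, V k) → Prop} {s t : Set κ} (hp : DependsOn p s) (hq : DependsOn q t)
    (hst : Disjoint s t) (hp' : ∃ m, p m) (hq' : ∃ m, q m) : ∃ m, p m ∧ q m := by
  classical
  obtain ⟨m, hm⟩ := hp'
  obtain ⟨m', hm'⟩ := hq'
  refine ⟨s.piecewise m m', ?_, ?_⟩
  · rwa [hp fun k hk ↦ piecewise_eq_of_mem s m m' hk]
  · rwa [hq fun k hk ↦ piecewise_eq_of_notMem s m m' (hst.notMem_of_mem_right hk)]

theorem summoning_common_past_nonempty_general
    {κ : Type*} {V : κ → Type*} {ι : Type*}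
    (S : ι → Set κ) (Q : (∀ k, V k) → Option ι) (i j : ι) (hij : i ≠ j)
    (hloci : ∀ m m' : ∀ k, V k, (∀ k ∈ S i, m k = m' k) →
      (Q m = some i ↔ Q m' = some i))
    (hlocj : ∀ m m' : ∀ k, V k, (∀ k ∈ S j, m k = m' k) →
      (Q m = some j ↔ Q m' = some j))
    (hi : ∃ m, Q m = some i) (hj : ∃ m', Q m' = some j) :
    (S i ∩ S j).Nonempty := by
  by_contra hempty
  have hdisj : Disjoint (S i) (S j) :=
    disjoint_iff_inter_eq_empty.2 (not_nonempty_iff_eq_empty.1 hempty)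
  obtain ⟨m, hmi, hmj⟩ := DependsOn.exists_and_of_disjoint
    (fun m m' h ↦ propext (hloci m m' h)) (fun m m' h ↦ propext (hlocj m m' h)) hdisj hi hj
  exact hij (Option.some_injective _ (hmi.symm.trans hmj))

/-- In a classically possible summoning task with unconstrained
inputs and at most one return point, the common past input-point sets of any
two attained return points are nonempty. -/
theorem summoning_common_past_nonempty
    {κ : Type*} {V : κ → Type*} [∀ k, Nonempty (V k)] {ι : Type*}
    (S : ι → Set κ) (Q : (∀ k, V k) → Option ι) (i j : ι) (hij : i ≠ j)
    (hloci : ∀ m m' : ∀ k, V k, (∀ k ∈ S i, m k = m' k) →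
      (Q m = some i ↔ Q m' = some i))
    (hlocj : ∀ m m' : ∀ k, V k, (∀ k ∈ S j, m k = m' k) →
      (Q m = some j ↔ Q m' = some j))
    (hi : ∃ m, Q m = some i) (hj : ∃ m', Q m' = some j) :
    (S i ∩ S j).Nonempty :=
  summoning_common_past_nonempty_general S Q i j hij hloci hlocj hi hj
end

section
/- In a classically possible summoning task with unconstrained inputs and at most one return point, any possible set of inputs at the common past input points of two return points must logically exclude at least one of the pair: if i ≠ j are return points, Q is a classical solution with local decidability at i and at j, and m, m' are full inputs with Q m = some i and Q m' = some j, then m and m' differ at some input point k ∈ S i ∩ S j. -/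
theorem Set.piecewise_eq_right_of_eq_on_inter {α : Type*} {β : α → Type*} {s t : Set α}
    {f g : ∀ a, β a} [∀ a, Decidable (a ∈ s)] (hfg : ∀ a ∈ s ∩ t, f a = g a) :
    ∀ a ∈ t, s.piecewise f g a = g a := by
  intro a ha
  by_cases has : a ∈ s
  · rw [s.piecewise_eq_of_mem f g has, hfg a ⟨has, ha⟩]
  · exact s.piecewise_eq_of_notMem f g has

theorem summoning_inputs_differ_on_common_past_general
    {κ : Type*} {V : κ → Type*} {ι : Type*}
    (S : ι → Set κ) (Q : (∀ k, V k) → Option ι) (i j : ι) (hij : i ≠ j)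
    (hloci : ∀ m m' : ∀ k, V k, (∀ k ∈ S i, m k = m' k) →
      (Q m = some i ↔ Q m' = some i))
    (hlocj : ∀ m m' : ∀ k, V k, (∀ k ∈ S j, m k = m' k) →
      (Q m = some j ↔ Q m' = some j))
    (m m' : ∀ k, V k) (hm : Q m = some i) (hm' : Q m' = some j) :
    ∃ k ∈ S i ∩ S j, m k ≠ m' k := by
  by_contra! hagree
  classical
  -- The splice reads like `m` on `S i` and, thanks to `hagree`, like `m'` on `S j`.
  set spliced := (S i).piecewise m m'
  have hi : Q spliced = some i :=
    (hloci m spliced fun k hk => ((S i).piecewise_eq_of_mem m m' hk).symm).mp hm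
  have hj : Q spliced = some j :=
    (hlocj m' spliced fun k hk =>
      (Set.piecewise_eq_right_of_eq_on_inter hagree k hk).symm).mp hm'
  exact hij (Option.some_injective _ (hi.symm.trans hj))

/-- Any possible set of inputs at the common past input points of
two return points must logically exclude at least one of the pair: inputs
designating distinct return points must differ somewhere on the common past. -/
theorem summoning_inputs_differ_on_common_past
    {κ : Type*} {V : κ → Type*} [∀ k, Nonempty (V k)] {ι : Type*}
    (S : ι → Set κ) (Q : (∀ k, V k) → Option ι) (i j : ι) (hij : i ≠ j)
    (hloci : ∀ m m' : ∀ k, V k, (∀ k ∈ S i, m k = m' k) →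
      (Q m = some i ↔ Q m' = some i))
    (hlocj : ∀ m m' : ∀ k, V k, (∀ k ∈ S j, m k = m' k) →
      (Q m = some j ↔ Q m' = some j))
    (m m' : ∀ k, V k) (hm : Q m = some i) (hm' : Q m' = some j) :
    ∃ k ∈ S i ∩ S j, m k ≠ m' k :=
  summoning_inputs_differ_on_common_past_general S Q i j hij hloci hlocj m m' hm hm'
end

section
/- In a classically possible summoning task with unconstrained inputs and at most one return point, the exclusion of one of any pair of return points is computable from the inputs on their common past: for return points i ≠ j with Q a classical solution having local decidability at i and at j, there exists a function D : (Π k, V k) → Bool that depends only on the restriction of the input to S i ∩ S j (if m and m' agree on all k ∈ S i ∩ S j then D m = D m'), such that for every full input m: if D m = true then Q m ≠ some j, and if D m = false then Q m ≠ some i. -/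
/-!
Let `D m` say that some input agreeing with `m` on `S i ∩ S j` is returned at `i`; this
depends only on the common past and is true whenever `Q m = some i`. If moreover
`Q m = some j`, glue the witness (on `S i`) with `m` (on `S j`): the two agree on the
overlap, so by local decidability the glued input would be returned at both `i` and `j`.
-/

section Gluing

variable {κ : Type*} {V : κ → Type*}

theorem exists_agreeOn_iff_of_agreeOn (s : Set κ) (P : (∀ k, V k) → Prop)
    {m m' : ∀ k, V k} (h : ∀ k ∈ s, m k = m' k) :
    (∃ x, (∀ k ∈ s, x k = m k) ∧ P x) ↔ (∃ x, (∀ k ∈ s, x k = m' k) ∧ P x) :=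
  ⟨fun ⟨x, hx, hP⟩ => ⟨x, fun k hk => (hx k hk).trans (h k hk), hP⟩,
    fun ⟨x, hx, hP⟩ => ⟨x, fun k hk => (hx k hk).trans (h k hk).symm, hP⟩⟩

theorem exists_agreeOn_of_agreeOn_inter (s t : Set κ) {m m' : ∀ k, V k}
    (h : ∀ k ∈ s ∩ t, m k = m' k) :
    ∃ x : ∀ k, V k, (∀ k ∈ s, m k = x k) ∧ (∀ k ∈ t, m' k = x k) := by
  classical
  refine ⟨t.piecewise m' m, fun k hks => ?_, fun k hkt => (t.piecewise_eq_of_mem _ _ hkt).symm⟩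
  by_cases hkt : k ∈ t
  · rw [t.piecewise_eq_of_mem _ _ hkt, h k ⟨hks, hkt⟩]
  · rw [t.piecewise_eq_of_notMem _ _ hkt]

theorem ne_some_of_agreeOn_inter {ι : Type*} {S : ι → Set κ} {Q : (∀ k, V k) → Option ι}
    {i j : ι} (hij : i ≠ j)
    (hloci : ∀ m m' : ∀ k, V k, (∀ k ∈ S i, m k = m' k) → (Q m = some i ↔ Q m' = some i))
    (hlocj : ∀ m m' : ∀ k, V k, (∀ k ∈ S j, m k = m' k) → (Q m = some j ↔ Q m' = some j))
    {m m' : ∀ k, V k} (h : ∀ k ∈ S i ∩ S j, m k = m' k) (hm : Q m = some i) :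
    Q m' ≠ some j := by
  intro hm'
  obtain ⟨x, hxi, hxj⟩ := exists_agreeOn_of_agreeOn_inter (S i) (S j) h
  have hQi : Q x = some i := (hloci m x hxi).mp hm
  have hQj : Q x = some j := (hlocj m' x hxj).mp hm'
  exact hij (Option.some_injective _ (hQi.symm.trans hQj))

end Gluing

theorem summoning_exclusion_decidable_on_common_past_general
    {κ : Type*} {V : κ → Type*} {ι : Type*}
    (S : ι → Set κ) (Q : (∀ k, V k) → Option ι) (i j : ι) (hij : i ≠ j)
    (hloci : ∀ m m' : ∀ k, V k, (∀ k ∈ S i, m k = m' k) →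
      (Q m = some i ↔ Q m' = some i))
    (hlocj : ∀ m m' : ∀ k, V k, (∀ k ∈ S j, m k = m' k) →
      (Q m = some j ↔ Q m' = some j)) :
    ∃ D : (∀ k, V k) → Bool,
      (∀ m m' : ∀ k, V k, (∀ k ∈ S i ∩ S j, m k = m' k) → D m = D m') ∧
      (∀ m : ∀ k, V k,
        (D m = true → Q m ≠ some j) ∧ (D m = false → Q m ≠ some i)) := by
  classical
  refine ⟨fun m => decide (∃ x, (∀ k ∈ S i ∩ S j, x k = m k) ∧ Q x = some i),
    fun m m' h => decide_eq_decide.mpr (exists_agreeOn_iff_of_agreeOn _ _ h),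
    fun m => ⟨fun hD => ?_, fun hD hm => of_decide_eq_false hD ⟨m, fun _ _ => rfl, hm⟩⟩⟩
  obtain ⟨x, hx, hQx⟩ := of_decide_eq_true hD
  exact ne_some_of_agreeOn_inter hij hloci hlocj hx hQx

/-- The exclusion of one of any pair of return points is
computable from the inputs on their common past. -/
theorem summoning_exclusion_decidable_on_common_past
    {κ : Type*} {V : κ → Type*} [∀ k, Nonempty (V k)] {ι : Type*}
    (S : ι → Set κ) (Q : (∀ k, V k) → Option ι) (i j : ι) (hij : i ≠ j)
    (hloci : ∀ m m' : ∀ k, V k, (∀ k ∈ S i, m k = m' k) →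
      (Q m = some i ↔ Q m' = some i))
    (hlocj : ∀ m m' : ∀ k, V k, (∀ k ∈ S j, m k = m' k) →
      (Q m = some j ↔ Q m' = some j)) :
    ∃ D : (∀ k, V k) → Bool,
      (∀ m m' : ∀ k, V k, (∀ k ∈ S i ∩ S j, m k = m' k) → D m = D m') ∧
      (∀ m : ∀ k, V k,
        (D m = true → Q m ≠ some j) ∧ (D m = false → Q m ≠ some i)) :=
  summoning_exclusion_decidable_on_common_past_general S Q i j hij hloci hlocj
end

section
/- A classically possible summoning task with unconstrained inputs and multiple return points refines to a task with at most one return point whose used return points have pairwise intersecting pasts: suppose V, κ, ι, S are as in the model, Q : (Π k, V k) → Set ι gives the valid return points of each input with membership locally decidable (for each i, whether i ∈ Q m depends only on the restriction of m to S i), and σ : (Π k, V k) → Option ι is a classical selection algorithm satisfying (validity) σ m = some i → i ∈ Q m, (completeness) Q m ≠ ∅ → σ m ≠ none, and (causality) for each i, whether σ m = some i depends only on the restriction of m to S i. Then for any i ≠ j that are both attained by σ (there exist m, m' with σ m = some i and σ m' = some j), the set S i ∩ S j is nonempty. -/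
/-! If the pasts of two attained return points `i ≠ j` were disjoint, an input agreeing with a
witness for `i` on `S i` and with a witness for `j` on `S j` would exist, since inputs are
unconstrained. By causality the algorithm would return at both `i` and `j` on it. -/

open Function

theorem DependsOn.exists_and_of_disjoint_s3 {κ : Type*} {V : κ → Type*}
    {P P' : (∀ k, V k) → Prop} {s t : Set κ} (hP : DependsOn P s) (hP' : DependsOn P' t)
    (hst : Disjoint s t) (hx : ∃ x, P x) (hy : ∃ y, P' y) : ∃ z, P z ∧ P' z := by
  classical
  obtain ⟨x, hPx⟩ := hx
  obtain ⟨y, hP'y⟩ := hy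
  refine ⟨s.piecewise x y, ?_, ?_⟩
  · rwa [hP fun k hk => Set.piecewise_eq_of_mem _ _ _ hk]
  · rwa [hP' fun k hk => Set.piecewise_eq_of_notMem _ _ _ (hst.notMem_of_mem_right hk)]

theorem summoning_multiple_return_points_refines_general
    {κ : Type*} {V : κ → Type*} {ι : Type*}
    (S : ι → Set κ)
    (σ : (∀ k, V k) → Option ι)
    (hcausal : ∀ (i : ι) (m m' : ∀ k, V k), (∀ k ∈ S i, m k = m' k) →
      (σ m = some i ↔ σ m' = some i))
    (i j : ι) (hij : i ≠ j)
    (hi : ∃ m, σ m = some i) (hj : ∃ m', σ m' = some j) :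
    (S i ∩ S j).Nonempty := by
  have hdep (l : ι) : DependsOn (σ · = some l) (S l) := fun m m' h => propext (hcausal l m m' h)
  rw [← Set.not_disjoint_iff_nonempty_inter]
  intro hdisj
  obtain ⟨m, hmi, hmj⟩ := (hdep i).exists_and_of_disjoint_s3 (hdep j) hdisj hi hj
  exact hij (Option.some_injective _ (hmi.symm.trans hmj))

/-- A classically possible summoning task with unconstrained
inputs and multiple return points refines to a task with at most one return
point whose used return points have pairwise intersecting pasts. -/
theorem summoning_multiple_return_points_refines
    {κ : Type*} {V : κ → Type*} [∀ k, Nonempty (V k)] {ι : Type*}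
    (S : ι → Set κ) (Q : (∀ k, V k) → Set ι)
    (hQloc : ∀ (i : ι) (m m' : ∀ k, V k), (∀ k ∈ S i, m k = m' k) →
      (i ∈ Q m ↔ i ∈ Q m'))
    (σ : (∀ k, V k) → Option ι)
    (hvalid : ∀ (m : ∀ k, V k) (i : ι), σ m = some i → i ∈ Q m)
    (hcomplete : ∀ m : ∀ k, V k, Q m ≠ ∅ → σ m ≠ none)
    (hcausal : ∀ (i : ι) (m m' : ∀ k, V k), (∀ k ∈ S i, m k = m' k) →
      (σ m = some i ↔ σ m' = some i))
    (i j : ι) (hij : i ≠ j)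
    (hi : ∃ m, σ m = some i) (hj : ∃ m', σ m' = some j) :
    (S i ∩ S j).Nonempty :=
  summoning_multiple_return_points_refines_general S σ hcausal i j hij hi hj
end

section
/- In a classically possible summoning task with unconstrained inputs and exactly one return point, the common past input-point sets of any two attained return points are nonempty: if Q : (Π k, V k) → ι is a total classical solution with local decidability (for each return point i, whether Q m = i depends only on the restriction of m to S i), i ≠ j, and there exist inputs m, m' with Q m = i and Q m' = j, then S i ∩ S j is nonempty. -/
/-! If `S i` and `S j` were disjoint, splicing an input leading to `i` on `S i` with an input
leading to `j` elsewhere would give a single input whose return point is both `i` and `j`. -/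

theorem exists_pi_eq_on_of_disjoint {κ : Type*} {V : κ → Type*} {s t : Set κ}
    (hst : Disjoint s t) (m m' : ∀ k, V k) :
    ∃ m'' : ∀ k, V k, (∀ k ∈ s, m k = m'' k) ∧ (∀ k ∈ t, m' k = m'' k) := by
  classical
  refine ⟨s.piecewise m m', fun k hk => (s.piecewise_eq_of_mem m m' hk).symm,
    fun k hk => (s.piecewise_eq_of_notMem m m' ?_).symm⟩
  exact hst.notMem_of_mem_right hk

theorem summoning_exactly_one_common_past_nonempty_general
    {κ : Type*} {V : κ → Type*} {ι : Type*}
    (S : ι → Set κ) (Q : (∀ k, V k) → ι)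
    (hloc : ∀ (i : ι) (m m' : ∀ k, V k), (∀ k ∈ S i, m k = m' k) →
      (Q m = i ↔ Q m' = i))
    (i j : ι) (hij : i ≠ j)
    (hi : ∃ m, Q m = i) (hj : ∃ m', Q m' = j) :
    (S i ∩ S j).Nonempty := by
  rw [← Set.not_disjoint_iff_nonempty_inter]
  intro hdisj
  obtain ⟨m, hm⟩ := hi
  obtain ⟨m', hm'⟩ := hj
  obtain ⟨m'', hmi, hmj⟩ := exists_pi_eq_on_of_disjoint hdisj m m'
  exact hij (((hloc i m m'' hmi).mp hm).symm.trans ((hloc j m' m'' hmj).mp hm'))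

/-- In a classically possible summoning task with unconstrained
inputs and exactly one return point, the common past input-point sets of any
two attained return points are nonempty. -/
theorem summoning_exactly_one_common_past_nonempty
    {κ : Type*} {V : κ → Type*} [∀ k, Nonempty (V k)] {ι : Type*}
    (S : ι → Set κ) (Q : (∀ k, V k) → ι)
    (hloc : ∀ (i : ι) (m m' : ∀ k, V k), (∀ k ∈ S i, m k = m' k) →
      (Q m = i ↔ Q m' = i))
    (i j : ι) (hij : i ≠ j)
    (hi : ∃ m, Q m = i) (hj : ∃ m', Q m' = j) :
    (S i ∩ S j).Nonempty :=
  summoning_exactly_one_common_past_nonempty_general S Q hloc i j hij hi hj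
end
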